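/- For real constants m, x₀ > 0, set c₁ = (0,0,1,1), c₂ = (0,0,−1,1), p'₀ = (1,0,0,x₀), p̄'₀ = (0,−1,m·x₀,0) in ℝ⁴. Then the discrete Möbius invariants satisfy: B(c₁,c₂)·B(c₂,p'₀)·B(p'₀,c₁) < 0 (so S = −1) and B(c₁,c₂)·B(c₂,p̄'₀)·B(p̄'₀,c₁) > 0 (so S̄ = +1); in particular the two signs are different. -/
import Mathlib

/-- The bilinear form of signature (3,1) defining the Möbius quadric
`X² + Y² + Z² − U² = 0`. -/
def mobiusForm (v w : Fin 4 → ℝ) : ℝ :=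
  v 0 * w 0 + v 1 * w 1 + v 2 * w 2 - v 3 * w 3

/-- with `c₁ = (0,0,1,1)`, `c₂ = (0,0,−1,1)`, `p'₀ = (1,0,0,x₀)`,
`p̄'₀ = (0,−1,m·x₀,0)`, the discrete Möbius invariants satisfy
`B(c₁,c₂)·B(c₂,p'₀)·B(p'₀,c₁) < 0` (so `S = −1`) and
`B(c₁,c₂)·B(c₂,p̄'₀)·B(p̄'₀,c₁) > 0` (so `S̄ = +1`); in particular the signs differ. -/
theorem discrete_mobius_invariants (m x₀ : ℝ) (hm : 0 < m) (hx₀ : 0 < x₀) :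
    mobiusForm ![0, 0, 1, 1] ![0, 0, -1, 1]
        * mobiusForm ![0, 0, -1, 1] ![1, 0, 0, x₀]
        * mobiusForm ![1, 0, 0, x₀] ![0, 0, 1, 1] < 0 ∧
    mobiusForm ![0, 0, 1, 1] ![0, 0, -1, 1]
        * mobiusForm ![0, 0, -1, 1] ![0, -1, m * x₀, 0]
        * mobiusForm ![0, -1, m * x₀, 0] ![0, 0, 1, 1] > 0 := by
  simp only [mobiusForm, Matrix.cons_val_zero, Matrix.cons_val_one, Matrix.head_cons,
    Matrix.cons_val_two, Matrix.tail_cons, Matrix.cons_val_three]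
  constructor <;> nlinarith [mul_pos hm hx₀, mul_pos hx₀ hx₀]
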